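/- (Composition in the classical context.) For all sets Γ₁, Γ₂ of hypothesis formulas, finite multisets Δ₁, Δ₂ of ecumenical propositional formulas, formulas A and B, and stoup C: if Γ₁ ⊢_{LE_p} Δ₁;C with A occurring in Δ₁, and Γ₂ ∪ {A} ⊢_{LE_p} Δ₂;B, then Γ₁ ∪ Γ₂ ⊢_{LE_p} Δ₁*,Δ₂,B;C, where Δ₁* is obtained from Δ₁ by deleting all occurrences of A. -/
import Mathlib


/-- Ecumenical propositional formulas. -/
inductive PForm : Type
  | atom : ℕ → PForm
  | bot : PForm
  | neg : PForm → PForm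
  | conj : PForm → PForm → PForm
  | impI : PForm → PForm → PForm
  | disjI : PForm → PForm → PForm
  | impC : PForm → PForm → PForm
  | disjC : PForm → PForm → PForm
  deriving DecidableEq

/-- Prawitz' propositional ecumenical natural deduction system NE_p. -/
inductive NEp : Set PForm → PForm → Prop
  | hyp {Γ A} : A ∈ Γ → NEp Γ A
  | conjI {Γ A B} : NEp Γ A → NEp Γ B → NEp Γ (.conj A B)
  | conjE1 {Γ A B} : NEp Γ (.conj A B) → NEp Γ A
  | conjE2 {Γ A B} : NEp Γ (.conj A B) → NEp Γ B
  | negI {Γ A} : NEp (insert A Γ) .bot → NEp Γ (.neg A)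
  | negE {Γ A} : NEp Γ A → NEp Γ (.neg A) → NEp Γ .bot
  | botE {Γ A} : NEp Γ .bot → NEp Γ A
  | impII {Γ A B} : NEp (insert A Γ) B → NEp Γ (.impI A B)
  | impIE {Γ A B} : NEp Γ (.impI A B) → NEp Γ A → NEp Γ B
  | disjII1 {Γ A B} : NEp Γ A → NEp Γ (.disjI A B)
  | disjII2 {Γ A B} : NEp Γ B → NEp Γ (.disjI A B)
  | disjIE {Γ A B C} : NEp Γ (.disjI A B) → NEp (insert A Γ) C → NEp (insert B Γ) C →
      NEp Γ C
  | impCI {Γ A B} : NEp (insert A (insert (.neg B) Γ)) .bot → NEp Γ (.impC A B)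
  | impCE {Γ A B} : NEp Γ (.impC A B) → NEp Γ A → NEp Γ (.neg B) → NEp Γ .bot
  | disjCI {Γ A B} : NEp (insert (.neg A) (insert (.neg B) Γ)) .bot → NEp Γ (.disjC A B)
  | disjCE {Γ A B} : NEp Γ (.disjC A B) → NEp Γ (.neg A) → NEp Γ (.neg B) → NEp Γ .bot

/-- The natural deduction system with stoup LE_p.  `LEp Γ Δ Σ` means that the
stoup-sequent `Δ;Σ` is derivable from the set `Γ` of hypothesis formulas, where the
classical context `Δ` is a finite multiset and the stoup `Σ` is empty (`none`) or a
single formula (`some A`). -/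
inductive LEp : Set PForm → Multiset PForm → Option PForm → Prop
  | hyp {Γ A} : A ∈ Γ → LEp Γ 0 (some A)
  | der {Γ Δ A} : LEp Γ Δ (some A) → LEp Γ (A ::ₘ Δ) none
  | wI {Γ Δ} (A) : LEp Γ Δ none → LEp Γ Δ (some A)
  | wC {Γ Δ S} (A) : LEp Γ Δ S → LEp Γ (A ::ₘ Δ) S
  | cC {Γ Δ S A} : LEp Γ (A ::ₘ A ::ₘ Δ) S → LEp Γ (A ::ₘ Δ) S
  | conjI {Γ Δ₁ Δ₂ A B} : LEp Γ Δ₁ (some A) → LEp Γ Δ₂ (some B) →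
      LEp Γ (Δ₁ + Δ₂) (some (.conj A B))
  | conjE1 {Γ Δ A B} : LEp Γ Δ (some (.conj A B)) → LEp Γ Δ (some A)
  | conjE2 {Γ Δ A B} : LEp Γ Δ (some (.conj A B)) → LEp Γ Δ (some B)
  | negI {Γ Δ A} : LEp (insert A Γ) Δ none → LEp Γ Δ (some (.neg A))
  | negE {Γ Δ₁ Δ₂ A} : LEp Γ Δ₁ (some A) → LEp Γ Δ₂ (some (.neg A)) →
      LEp Γ (Δ₁ + Δ₂) none
  | impII {Γ Δ A B} : LEp (insert A Γ) Δ (some B) → LEp Γ Δ (some (.impI A B))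
  | impIE {Γ Δ₁ Δ₂ A B} : LEp Γ Δ₁ (some (.impI A B)) → LEp Γ Δ₂ (some A) →
      LEp Γ (Δ₁ + Δ₂) (some B)
  | disjII1 {Γ Δ A B} : LEp Γ Δ (some A) → LEp Γ Δ (some (.disjI A B))
  | disjII2 {Γ Δ A B} : LEp Γ Δ (some B) → LEp Γ Δ (some (.disjI A B))
  | disjIE {Γ Δ₁ Δ₂ Δ₃ A B C} : LEp Γ Δ₁ (some (.disjI A B)) →
      LEp (insert A Γ) Δ₂ (some C) → LEp (insert B Γ) Δ₃ (some C) →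
      LEp Γ (Δ₁ + Δ₂ + Δ₃) (some C)
  | impCI {Γ Δ A B} : LEp (insert A Γ) (B ::ₘ Δ) none → LEp Γ Δ (some (.impC A B))
  | impCE {Γ Δ₁ Δ₂ Δ₃ A B} : LEp Γ Δ₁ (some (.impC A B)) → LEp Γ Δ₂ (some A) →
      LEp (insert B Γ) Δ₃ none → LEp Γ (Δ₁ + Δ₂ + Δ₃) none
  | disjCI {Γ Δ A B} : LEp Γ (A ::ₘ B ::ₘ Δ) none → LEp Γ Δ (some (.disjC A B))
  | disjCE {Γ Δ₁ Δ₂ Δ₃ A B} : LEp Γ Δ₁ (some (.disjC A B)) →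
      LEp (insert A Γ) Δ₂ none → LEp (insert B Γ) Δ₃ none →
      LEp Γ (Δ₁ + Δ₂ + Δ₃) none

/-- The set `¬Δ` of negations of the formulas occurring in the multiset `Δ`. -/
def negSet (Δ : Multiset PForm) : Set PForm := {B | ∃ D ∈ Δ, B = PForm.neg D}


theorem LEp_congr {Γ : Set PForm} {Δ Δ' : Multiset PForm} {S : Option PForm}
    (h : LEp Γ Δ S) (e : Δ = Δ') : LEp Γ Δ' S := e ▸ h

theorem LEp_mono {Γ : Set PForm} {Δ : Multiset PForm} {S : Option PForm}
    (h : LEp Γ Δ S) {Γ' : Set PForm} (hs : Γ ⊆ Γ') : LEp Γ' Δ S := by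
  induction h generalizing Γ' with
  | hyp hm => exact .hyp (hs hm)
  | der _ ih => exact .der (ih hs)
  | wI A _ ih => exact .wI A (ih hs)
  | wC A _ ih => exact .wC A (ih hs)
  | cC _ ih => exact .cC (ih hs)
  | conjI _ _ ih1 ih2 => exact .conjI (ih1 hs) (ih2 hs)
  | conjE1 _ ih => exact .conjE1 (ih hs)
  | conjE2 _ ih => exact .conjE2 (ih hs)
  | negI _ ih => exact .negI (ih (Set.insert_subset_insert hs))
  | negE _ _ ih1 ih2 => exact .negE (ih1 hs) (ih2 hs)
  | impII _ ih => exact .impII (ih (Set.insert_subset_insert hs))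
  | impIE _ _ ih1 ih2 => exact .impIE (ih1 hs) (ih2 hs)
  | disjII1 _ ih => exact .disjII1 (ih hs)
  | disjII2 _ ih => exact .disjII2 (ih hs)
  | disjIE _ _ _ ih1 ih2 ih3 =>
      exact .disjIE (ih1 hs) (ih2 (Set.insert_subset_insert hs))
        (ih3 (Set.insert_subset_insert hs))
  | impCI _ ih => exact .impCI (ih (Set.insert_subset_insert hs))
  | impCE _ _ _ ih1 ih2 ih3 =>
      exact .impCE (ih1 hs) (ih2 hs) (ih3 (Set.insert_subset_insert hs))
  | disjCI _ ih => exact .disjCI (ih hs)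
  | disjCE _ _ _ ih1 ih2 ih3 =>
      exact .disjCE (ih1 hs) (ih2 (Set.insert_subset_insert hs))
        (ih3 (Set.insert_subset_insert hs))

theorem LEp_wC_mset {Γ : Set PForm} {Δ : Multiset PForm} {S : Option PForm}
    (M : Multiset PForm) (h : LEp Γ Δ S) : LEp Γ (M + Δ) S := by
  induction M using Multiset.induction with
  | empty => simpa using h
  | cons a M ih => exact LEp_congr (.wC a ih) (Multiset.cons_add a M Δ).symm

theorem LEp_cC_mset {Γ : Set PForm} {S : Option PForm} (M : Multiset PForm) :
    ∀ {Δ : Multiset PForm}, LEp Γ (M + M + Δ) S → LEp Γ (M + Δ) S := by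
  induction M using Multiset.induction with
  | empty => intro Δ h; simpa using h
  | cons a M ih =>
      intro Δ h
      have h1 : LEp Γ (a ::ₘ a ::ₘ (M + M + Δ)) S :=
        LEp_congr h (by simp only [← Multiset.singleton_add]; abel)
      have h3 : LEp Γ (M + M + (a ::ₘ Δ)) S :=
        LEp_congr (LEp.cC h1) (by simp only [← Multiset.singleton_add]; abel)
      exact LEp_congr (ih h3) (by simp only [← Multiset.singleton_add]; abel)

theorem LEp_contract_nsmul {Γ : Set PForm} {S : Option PForm} (M : Multiset PForm) :
    ∀ (n : ℕ) {Δ : Multiset PForm}, LEp Γ (Δ + (n + 1) • M) S → LEp Γ (Δ + M) S := by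
  intro n
  induction n with
  | zero => intro Δ h; simpa using h
  | succ n ih =>
      intro Δ h
      apply ih
      have h1 : LEp Γ (M + M + (Δ + n • M)) S :=
        LEp_congr h (by simp only [succ_nsmul]; abel)
      exact LEp_congr (LEp_cC_mset M h1) (by simp only [succ_nsmul]; abel)

theorem cons_eq_decomp {A a : PForm} {Δ₀ Δ' : Multiset PForm} {n : ℕ}
    (h : a ::ₘ Δ₀ = Δ' + Multiset.replicate n A) :
    (a = A ∧ ∃ n', n = n' + 1 ∧ Δ₀ = Δ' + Multiset.replicate n' A) ∨
    (∃ Δ'', Δ' = a ::ₘ Δ'' ∧ Δ₀ = Δ'' + Multiset.replicate n A) := by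
  rcases n with _ | n'
  · right
    exact ⟨Δ₀, by simpa using h.symm, by simp⟩
  · by_cases ha : a = A
    · left
      subst ha
      refine ⟨rfl, n', rfl, ?_⟩
      have h2 : a ::ₘ Δ₀ = a ::ₘ (Δ' + Multiset.replicate n' a) := by
        rw [h, Multiset.replicate_succ, Multiset.add_cons]
      exact (Multiset.cons_inj_right _).mp h2
    · right
      have hmem : a ∈ Δ' + Multiset.replicate (n' + 1) A := by
        rw [← h]; exact Multiset.mem_cons_self a Δ₀
      have hmem' : a ∈ Δ' := by
        rcases Multiset.mem_add.mp hmem with hm | hm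
        · exact hm
        · exact absurd (Multiset.eq_of_mem_replicate hm) ha
      refine ⟨Δ'.erase a, (Multiset.cons_erase hmem').symm, ?_⟩
      have h2 : a ::ₘ Δ₀ = a ::ₘ (Δ'.erase a + Multiset.replicate (n' + 1) A) := by
        rw [h, ← Multiset.cons_add, Multiset.cons_erase hmem']
      exact (Multiset.cons_inj_right _).mp h2

theorem split_decomp {A : PForm} : ∀ (n : ℕ) (Δa Δb Δ' : Multiset PForm),
    Δa + Δb = Δ' + Multiset.replicate n A →
    ∃ Δ'a Δ'b na nb, Δa = Δ'a + Multiset.replicate na A ∧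
      Δb = Δ'b + Multiset.replicate nb A ∧ Δ' = Δ'a + Δ'b ∧ n = na + nb := by
  intro n
  induction n with
  | zero =>
      intro Δa Δb Δ' h
      exact ⟨Δa, Δb, 0, 0, by simp, by simp, by simpa using h.symm, rfl⟩
  | succ n ih =>
      intro Δa Δb Δ' h
      have hmem : A ∈ Δa + Δb := by
        rw [h, Multiset.replicate_succ, Multiset.add_cons]
        exact Multiset.mem_cons_self A _
      rcases Multiset.mem_add.mp hmem with hm | hm
      · have h2 : Δa.erase A + Δb = Δ' + Multiset.replicate n A := by
          have h3 : A ::ₘ (Δa.erase A + Δb) = A ::ₘ (Δ' + Multiset.replicate n A) := by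
            rw [← Multiset.cons_add, Multiset.cons_erase hm, h,
              Multiset.replicate_succ, Multiset.add_cons]
          exact (Multiset.cons_inj_right _).mp h3
        obtain ⟨Δ'a, Δ'b, na, nb, ha, hb, hΔ, hn⟩ := ih _ _ _ h2
        refine ⟨Δ'a, Δ'b, na + 1, nb, ?_, hb, hΔ, by omega⟩
        rw [← Multiset.cons_erase hm, ha, Multiset.replicate_succ, Multiset.add_cons]
      · have h2 : Δa + Δb.erase A = Δ' + Multiset.replicate n A := by
          have h3 : A ::ₘ (Δa + Δb.erase A) = A ::ₘ (Δ' + Multiset.replicate n A) := by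
            rw [← Multiset.add_cons, Multiset.cons_erase hm, h,
              Multiset.replicate_succ, Multiset.add_cons]
          exact (Multiset.cons_inj_right _).mp h3
        obtain ⟨Δ'a, Δ'b, na, nb, ha, hb, hΔ, hn⟩ := ih _ _ _ h2
        refine ⟨Δ'a, Δ'b, na, nb + 1, ha, ?_, hΔ, by omega⟩
        rw [← Multiset.cons_erase hm, hb, Multiset.replicate_succ, Multiset.add_cons]

theorem LEp_subst {Γ₂ : Set PForm} {Δ₂ : Multiset PForm} {A B : PForm}
    (hI : LEp Γ₂ Δ₂ (some (PForm.impI A B)))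
    {Γ : Set PForm} {Δ : Multiset PForm} {S : Option PForm} (h : LEp Γ Δ S) :
    ∀ Δ' n, Δ = Δ' + Multiset.replicate n A →
      LEp (Γ ∪ Γ₂) (Δ' + n • (Δ₂ + {B})) S := by
  induction h with
  | hyp hm =>
      intro Δ' n he
      rw [eq_comm, add_eq_zero] at he
      obtain ⟨rfl, he2⟩ := he
      have : n = 0 := by simpa using congrArg Multiset.card he2
      subst this
      simpa using LEp.hyp (Γ := _ ∪ Γ₂) (Or.inl hm)
  | der hp ih =>
      intro Δ' n he
      rcases cons_eq_decomp he with ⟨rfl, n', rfl, hc⟩ | ⟨Δ'', rfl, hc⟩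
      · refine LEp_congr (LEp.der (LEp.impIE (LEp_mono hI Set.subset_union_right)
          (ih Δ' n' hc))) ?_
        simp only [succ_nsmul, ← Multiset.singleton_add]; abel
      · exact LEp_congr (LEp.der (ih Δ'' n hc)) (Multiset.cons_add _ _ _).symm
  | wI A' _ ih => exact fun Δ' n he => .wI A' (ih Δ' n he)
  | wC A' hp ih =>
      intro Δ' n he
      rcases cons_eq_decomp he with ⟨rfl, n', rfl, hc⟩ | ⟨Δ'', rfl, hc⟩
      · refine LEp_congr (LEp_wC_mset (Δ₂ + {B}) (ih Δ' n' hc)) ?_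
        simp only [succ_nsmul]; abel
      · exact LEp_congr (LEp.wC A' (ih Δ'' n hc)) (Multiset.cons_add _ _ _).symm
  | @cC Γc Δc Sc a hp ih =>
      intro Δ' n he
      rcases cons_eq_decomp he with ⟨rfl, n', rfl, hc⟩ | ⟨Δ'', rfl, hc⟩
      · have h1 := ih Δ' (n' + 1 + 1) (by
          rw [hc]
          simp only [Multiset.replicate_succ, ← Multiset.singleton_add]; abel)
        have h2 : LEp (Γc ∪ Γ₂) ((Δ₂ + {B}) + (Δ₂ + {B}) + (Δ' + n' • (Δ₂ + {B}))) Sc :=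
          LEp_congr h1 (by simp only [succ_nsmul]; abel)
        exact LEp_congr (LEp_cC_mset _ h2) (by simp only [succ_nsmul]; abel)
      · have h1 := ih (a ::ₘ a ::ₘ Δ'') n (by
          rw [hc]
          simp only [← Multiset.singleton_add]; abel)
        have h2 : LEp (Γc ∪ Γ₂) (a ::ₘ a ::ₘ (Δ'' + n • (Δ₂ + {B}))) Sc :=
          LEp_congr h1 (by simp only [← Multiset.singleton_add]; abel)
        exact LEp_congr (LEp.cC h2) (Multiset.cons_add _ _ _).symm
  | conjI h1 h2 ih1 ih2 =>
      intro Δ' n he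
      obtain ⟨Δ'a, Δ'b, na, nb, ha, hb, rfl, rfl⟩ := split_decomp n _ _ Δ' he
      exact LEp_congr (LEp.conjI (ih1 _ _ ha) (ih2 _ _ hb)) (by
        simp only [add_nsmul]; abel)
  | conjE1 _ ih => exact fun Δ' n he => .conjE1 (ih Δ' n he)
  | conjE2 _ ih => exact fun Δ' n he => .conjE2 (ih Δ' n he)
  | disjII1 _ ih => exact fun Δ' n he => .disjII1 (ih Δ' n he)
  | disjII2 _ ih => exact fun Δ' n he => .disjII2 (ih Δ' n he)
  | negI _ ih =>
      intro Δ' n he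
      have h1 := ih Δ' n he
      rw [Set.insert_union] at h1
      exact .negI h1
  | negE h1 h2 ih1 ih2 =>
      intro Δ' n he
      obtain ⟨Δ'a, Δ'b, na, nb, ha, hb, rfl, rfl⟩ := split_decomp n _ _ Δ' he
      exact LEp_congr (LEp.negE (ih1 _ _ ha) (ih2 _ _ hb)) (by
        simp only [add_nsmul]; abel)
  | impII _ ih =>
      intro Δ' n he
      have h1 := ih Δ' n he
      rw [Set.insert_union] at h1
      exact .impII h1
  | impIE h1 h2 ih1 ih2 =>
      intro Δ' n he
      obtain ⟨Δ'a, Δ'b, na, nb, ha, hb, rfl, rfl⟩ := split_decomp n _ _ Δ' he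
      exact LEp_congr (LEp.impIE (ih1 _ _ ha) (ih2 _ _ hb)) (by
        simp only [add_nsmul]; abel)
  | disjIE h1 h2 h3 ih1 ih2 ih3 =>
      intro Δ' n he
      obtain ⟨Δ'ab, Δ'c, nab, nc, hab, hcc, rfl, rfl⟩ := split_decomp n _ _ Δ' he
      obtain ⟨Δ'a, Δ'b, na, nb, ha, hb, rfl, rfl⟩ := split_decomp nab _ _ Δ'ab hab
      have g2 := ih2 _ _ hb
      have g3 := ih3 _ _ hcc
      rw [Set.insert_union] at g2 g3
      exact LEp_congr (LEp.disjIE (ih1 _ _ ha) g2 g3) (by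
        simp only [add_nsmul]; abel)
  | @impCI Γc Δc A₀ B' hp ih =>
      intro Δ' n he
      have h1 := ih (B' ::ₘ Δ') n (by rw [he, Multiset.cons_add])
      rw [Set.insert_union] at h1
      exact .impCI (LEp_congr h1 (Multiset.cons_add _ _ _))
  | impCE h1 h2 h3 ih1 ih2 ih3 =>
      intro Δ' n he
      obtain ⟨Δ'ab, Δ'c, nab, nc, hab, hcc, rfl, rfl⟩ := split_decomp n _ _ Δ' he
      obtain ⟨Δ'a, Δ'b, na, nb, ha, hb, rfl, rfl⟩ := split_decomp nab _ _ Δ'ab hab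
      have g3 := ih3 _ _ hcc
      rw [Set.insert_union] at g3
      exact LEp_congr (LEp.impCE (ih1 _ _ ha) (ih2 _ _ hb) g3) (by
        simp only [add_nsmul]; abel)
  | @disjCI Γc Δc A₀ B₀ hp ih =>
      intro Δ' n he
      have h1 := ih (A₀ ::ₘ B₀ ::ₘ Δ') n (by
        rw [he, Multiset.cons_add, Multiset.cons_add])
      exact .disjCI (LEp_congr h1 (by
        rw [Multiset.cons_add, Multiset.cons_add]))
  | disjCE h1 h2 h3 ih1 ih2 ih3 =>
      intro Δ' n he
      obtain ⟨Δ'ab, Δ'c, nab, nc, hab, hcc, rfl, rfl⟩ := split_decomp n _ _ Δ' he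
      obtain ⟨Δ'a, Δ'b, na, nb, ha, hb, rfl, rfl⟩ := split_decomp nab _ _ Δ'ab hab
      have g2 := ih2 _ _ hb
      have g3 := ih3 _ _ hcc
      rw [Set.insert_union] at g2 g3
      exact LEp_congr (LEp.disjCE (ih1 _ _ ha) g2 g3) (by
        simp only [add_nsmul]; abel)

/-- Composition in the classical context: if `Γ₁ ⊢ Δ₁;C` with
`A ∈ Δ₁` and `Γ₂ ∪ {A} ⊢ Δ₂;B`, then `Γ₁ ∪ Γ₂ ⊢ Δ₁*,Δ₂,B;C`, where `Δ₁*` is `Δ₁`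
with all occurrences of `A` deleted. -/
theorem LEp_comp_context (Γ₁ Γ₂ : Set PForm) (Δ₁ Δ₂ : Multiset PForm) (A B : PForm)
    (C : Option PForm) (hA : A ∈ Δ₁) (h₁ : LEp Γ₁ Δ₁ C)
    (h₂ : LEp (insert A Γ₂) Δ₂ (some B)) :
    LEp (Γ₁ ∪ Γ₂) (Δ₁.filter (fun X => X ≠ A) + Δ₂ + {B}) C := by
  have hI : LEp Γ₂ Δ₂ (some (PForm.impI A B)) := .impII h₂
  have hsplit : Δ₁ = Δ₁.filter (fun X => X ≠ A) +
      Multiset.replicate (Multiset.count A Δ₁) A := by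
    conv_lhs => rw [← Multiset.filter_add_not (fun X => X ≠ A) Δ₁]
    congr 1
    simp only [ne_eq, not_not]
    rw [Multiset.filter_eq']
  have h := LEp_subst hI h₁ _ (Multiset.count A Δ₁) hsplit
  have hn1 : 1 ≤ Multiset.count A Δ₁ := Multiset.one_le_count_iff_mem.mpr hA
  obtain ⟨m, hm⟩ : ∃ m, Multiset.count A Δ₁ = m + 1 :=
    ⟨Multiset.count A Δ₁ - 1, by omega⟩
  rw [hm] at h
  exact LEp_congr (LEp_contract_nsmul _ m h) (by rw [add_assoc])
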